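/- arXiv:1807.10300 — 3 statements merged into one kernel-verified Lean document; each statement's English description precedes it below -/
import Mathlib

section
/- Let O ⊆ ℝ^r, Q ⊆ ℝ^s, A ⊆ ℝ^t, and let lab : O × Q → A. Suppose there exist an n-dimensional smooth submanifold O_n ⊆ O, questions q_1, …, q_k ∈ Q, and a map f : O_n → A^k defined by f(o) = (lab(o,q_1), …, lab(o,q_k)) such that f is a diffeomorphism onto its image. Then for any encoder E : O → R with R ⊆ ℝ^m and any smooth decoder D : R × Q → A satisfying D(E(o), q) = lab(o, q) for all o ∈ O and q ∈ Q, we must have m ≥ n. -/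
open Set

/-- `M ⊆ ℝ^t` is an `n`-dimensional smooth submanifold: around every point of
`M` there is a chart, i.e. a smooth map `φ` (defined on an ambient open set)
and a smooth map `ψ : ℝ^n → ℝ^t` that are mutually inverse between `M ∩ U` and
an open subset of `ℝ^n`. -/
def IsSmoothSubmanifold (n t : ℕ) (M : Set (Fin t → ℝ)) : Prop :=
  ∀ x ∈ M, ∃ (U : Set (Fin t → ℝ)) (φ : (Fin t → ℝ) → (Fin n → ℝ))
      (ψ : (Fin n → ℝ) → (Fin t → ℝ)),
    IsOpen U ∧ x ∈ U ∧
    ContDiffOn ℝ (⊤ : ℕ∞) φ U ∧ ContDiff ℝ (⊤ : ℕ∞) ψ ∧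
    (∀ y ∈ M ∩ U, ψ (φ y) = y) ∧
    (∀ z ∈ φ '' (M ∩ U), φ (ψ z) = z) ∧
    ψ '' (φ '' (M ∩ U)) = M ∩ U ∧
    IsOpen (φ '' (M ∩ U))

section Aux

lemma aux_det_comp_zero {n m : ℕ} (hmn : m < n)
    (g' : (Fin m → ℝ) →ₗ[ℝ] (Fin n → ℝ)) (P : (Fin n → ℝ) →ₗ[ℝ] (Fin m → ℝ)) :
    LinearMap.det (g'.comp P) = 0 := by
  by_contra hdet
  have hsurj : Function.Surjective (g'.comp P) := fun y =>
    ⟨(LinearMap.equivOfDetNeZero (g'.comp P) hdet).symm y,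
     (LinearMap.equivOfDetNeZero (g'.comp P) hdet).apply_symm_apply y⟩
  have h1 : (⊤ : Submodule ℝ (Fin n → ℝ)) ≤ LinearMap.range g' := by
    rw [← LinearMap.range_eq_top.2 hsurj]
    exact LinearMap.range_comp_le_range P g'
  have h2 : LinearMap.range g' = ⊤ := top_le_iff.1 h1
  have h3 : Module.finrank ℝ (LinearMap.range g') ≤ m := by
    calc Module.finrank ℝ (LinearMap.range g') ≤ Module.finrank ℝ (Fin m → ℝ) :=
          LinearMap.finrank_range_le g'
      _ = m := Module.finrank_fin_fun ℝ
  rw [h2, finrank_top] at h3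
  rw [Module.finrank_fin_fun ℝ] at h3
  omega

end Aux

/-- Proposition 1 (minimal representation for SciNet).  If the data
`(O, Q, lab)` has dimension at least `n` — witnessed by an `n`-dimensional
smooth submanifold `On ⊆ O`, finitely many questions `q₁, …, q_k ∈ Q`, and
the map `f(o) = (lab(o,q₁), …, lab(o,q_k))` being a diffeomorphism onto its
image — then any sufficient representation with a smooth decoder needs at
least `n` latent variables: `m ≥ n`. -/
theorem minimal_representation_for_SciNet
    (r s t n m k : ℕ) (hn : 1 ≤ n)
    (O : Set (Fin r → ℝ)) (Q : Set (Fin s → ℝ)) (A : Set (Fin t → ℝ))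
    (lab : (Fin r → ℝ) → (Fin s → ℝ) → (Fin t → ℝ))
    (hlab : ∀ o ∈ O, ∀ q ∈ Q, lab o q ∈ A)
    -- the data has dimension at least n:
    (On : Set (Fin r → ℝ)) (hOnO : On ⊆ O) (hOn : IsSmoothSubmanifold n r On)
    (hOne : On.Nonempty)
    (q : Fin k → (Fin s → ℝ)) (hq : ∀ i, q i ∈ Q)
    (f : (Fin r → ℝ) → (Fin k → Fin t → ℝ)) (hfdef : ∀ o, f o = fun i => lab o (q i))
    (g : (Fin k → Fin t → ℝ) → (Fin r → ℝ))
    (hfsmooth : ContDiffOn ℝ (⊤ : ℕ∞) f On) (hgsmooth : ContDiffOn ℝ (⊤ : ℕ∞) g (f '' On))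
    (hgf : ∀ o ∈ On, g (f o) = o)
    -- a sufficient representation with smooth decoder:
    (R : Set (Fin m → ℝ)) (E : (Fin r → ℝ) → (Fin m → ℝ)) (hER : ∀ o ∈ O, E o ∈ R)
    (D : (Fin m → ℝ) × (Fin s → ℝ) → (Fin t → ℝ))
    (hD : ContDiffOn ℝ (⊤ : ℕ∞) D (R ×ˢ Q))
    (hsufficient : ∀ o ∈ O, ∀ qu ∈ Q, D (E o, qu) = lab o qu) :
    n ≤ m := by
  by_contra hcon
  push_neg at hcon
  obtain ⟨x₀, hx₀⟩ := hOne
  obtain ⟨U, φ, ψ, hUopen, hx₀U, hφ, hψ, hψφ, hφψ, himg, hopen⟩ := hOn x₀ hx₀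
  set S : Set (Fin m → ℝ) := E '' (On ∩ U) with hSdef
  set h1 : (Fin m → ℝ) → (Fin k → Fin t → ℝ) := fun z i => D (z, q i) with hh1
  have hmem : ∀ o ∈ On ∩ U, h1 (E o) = f o := by
    intro o ho
    funext i
    rw [hfdef]
    exact hsufficient o (hOnO ho.1) (q i) (hq i)
  have hg1 : ∀ o ∈ On ∩ U, g (h1 (E o)) = o := by
    intro o ho
    rw [hmem o ho]
    exact hgf o ho.1
  set h : (Fin m → ℝ) → (Fin n → ℝ) := fun z => φ (g (h1 z)) with hh
  have hSR : S ⊆ R := by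
    rintro _ ⟨o, ho, rfl⟩
    exact hER o (hOnO ho.1)
  have h1smooth : ContDiffOn ℝ (⊤ : ℕ∞) h1 S := by
    apply contDiffOn_pi.2
    intro i
    have hpr : ContDiffOn ℝ (⊤ : ℕ∞) (fun z : Fin m → ℝ => (z, q i)) S :=
      (contDiff_id.prodMk contDiff_const).contDiffOn
    exact hD.comp hpr (fun z hz => ⟨hSR hz, hq i⟩)
  have h1maps : Set.MapsTo h1 S (f '' On) := by
    rintro _ ⟨o, ho, rfl⟩
    rw [hmem o ho]
    exact Set.mem_image_of_mem f ho.1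
  have hgmaps : Set.MapsTo (g ∘ h1) S U := by
    rintro _ ⟨o, ho, rfl⟩
    show g (h1 (E o)) ∈ U
    rw [hg1 o ho]
    exact ho.2
  have hhsmooth : ContDiffOn ℝ (⊤ : ℕ∞) h S :=
    hφ.comp (hgsmooth.comp h1smooth h1maps) hgmaps
  -- the projection ℝ^n → ℝ^m
  set P : (Fin n → ℝ) →L[ℝ] (Fin m → ℝ) :=
    ContinuousLinearMap.pi (fun i => ContinuousLinearMap.proj (Fin.castLE hcon.le i)) with hP
  have hPapp : ∀ (x : Fin n → ℝ) (i : Fin m), P x i = x (Fin.castLE hcon.le i) := by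
    intro x i
    simp [hP]
  have hPsurj : Function.Surjective P := by
    intro z
    refine ⟨fun j => if hj : (j : ℕ) < m then z ⟨(j : ℕ), hj⟩ else 0, ?_⟩
    funext i
    rw [hPapp]
    have hlt : ((Fin.castLE hcon.le i : Fin n) : ℕ) < m := i.isLt
    rw [dif_pos hlt]
    congr 1
  set T : Set (Fin n → ℝ) := P ⁻¹' S with hT
  have hdiff : DifferentiableOn ℝ h S := hhsmooth.differentiableOn (by simp)
  set F' : (Fin n → ℝ) → ((Fin n → ℝ) →L[ℝ] (Fin n → ℝ)) :=
    fun x => (fderivWithin ℝ h S (P x)).comp P with hF'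
  have hder : ∀ x ∈ T, HasFDerivWithinAt (h ∘ P) (F' x) T x := by
    intro x hx
    exact HasFDerivWithinAt.comp x ((hdiff (P x) hx).hasFDerivWithinAt)
      (P.hasFDerivAt.hasFDerivWithinAt) (fun y hy => hy)
  have hdet : ∀ x ∈ T, (F' x).det = 0 := by
    intro x _
    have := aux_det_comp_zero hcon (fderivWithin ℝ h S (P x) : _ →L[ℝ] _).toLinearMap
      (P : _ →L[ℝ] _).toLinearMap
    simpa [ContinuousLinearMap.det, hF'] using this
  have hzero : MeasureTheory.volume ((h ∘ P) '' T) = 0 :=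
    MeasureTheory.addHaar_image_eq_zero_of_det_fderivWithin_eq_zero MeasureTheory.volume hder hdet
  have hsub : φ '' (On ∩ U) ⊆ (h ∘ P) '' T := by
    rintro _ ⟨o, ho, rfl⟩
    obtain ⟨x, hx⟩ := hPsurj (E o)
    refine ⟨x, ?_, ?_⟩
    · show P x ∈ S
      rw [hx]
      exact ⟨o, ho, rfl⟩
    · show h (P x) = φ o
      rw [hx, hh]
      simp only
      rw [hg1 o ho]
  have hne : (φ '' (On ∩ U)).Nonempty := ⟨φ x₀, Set.mem_image_of_mem φ ⟨hx₀, hx₀U⟩⟩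
  have hpos : 0 < MeasureTheory.volume (φ '' (On ∩ U)) := hopen.measure_pos _ hne
  have : MeasureTheory.volume (φ '' (On ∩ U)) = 0 :=
    le_antisymm (hzero ▸ MeasureTheory.measure_mono hsub) zero_le
  exact absurd this hpos.ne'
end

section
/- Let H : G → O be a smooth surjective function with G ⊆ ℝ^d bounded and O ⊆ ℝ^r, and suppose H is nondegenerate, i.e., there exists an open subset N_d ⊆ G such that the restriction of H to N_d is a diffeomorphism onto H(N_d). Then: (a) there exists an encoder E : O → G ⊆ ℝ^d and a smooth decoder D : G → O with D(E(o)) = o for all o ∈ O; and (b) any encoder E' : O → ℝ^m together with a smooth decoder D' : ℝ^m → O satisfying D'(E'(o)) = o for all o ∈ O must have m ≥ d. -/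
open Set

/-- Corollary (minimal representation for an autoencoder).  Let `H : G → O` be
a smooth surjective data-generating function on a bounded set `G ⊆ ℝ^d`,
nondegenerate in the sense that `H` restricts to a diffeomorphism on some
(nonempty) open set `N ⊆ G`.  Then (a) there is an encoder `E : O → G` and a
smooth decoder (namely `H`) with `D(E(o)) = o` on `O`, and (b) any encoder into
`ℝ^m` with a smooth decoder reconstructing all of `O` satisfies `m ≥ d`. -/
theorem minimal_representation_for_autoencoder
    (d r : ℕ) (G : Set (Fin d → ℝ)) (hGbd : Bornology.IsBounded G)
    (O : Set (Fin r → ℝ))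
    (H : (Fin d → ℝ) → (Fin r → ℝ))
    (hHsmooth : ContDiffOn ℝ (⊤ : ℕ∞) H G) (hHsurj : H '' G = O)
    -- nondegeneracy: H restricted to a nonempty open subset N of G is a
    -- diffeomorphism onto its image
    (N : Set (Fin d → ℝ)) (hNG : N ⊆ G) (hNopen : IsOpen N) (hNne : N.Nonempty)
    (Hinv : (Fin r → ℝ) → (Fin d → ℝ))
    (hHinv_smooth : ContDiffOn ℝ (⊤ : ℕ∞) Hinv (H '' N))
    (hleft : ∀ x ∈ N, Hinv (H x) = x) (hright : ∀ y ∈ H '' N, H (Hinv y) = y) :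
    -- (a) existence of a sufficient representation with d latent variables
    (∃ E : (Fin r → ℝ) → (Fin d → ℝ), (∀ o ∈ O, E o ∈ G) ∧
      ∃ D : (Fin d → ℝ) → (Fin r → ℝ), ContDiffOn ℝ (⊤ : ℕ∞) D G ∧
        ∀ o ∈ O, D (E o) = o) ∧
    -- (b) any representation with a smooth decoder needs at least d variables
    (∀ (m : ℕ) (E' : (Fin r → ℝ) → (Fin m → ℝ)) (D' : (Fin m → ℝ) → (Fin r → ℝ)),
      ContDiff ℝ (⊤ : ℕ∞) D' → (∀ o ∈ O, D' (E' o) = o) → d ≤ m) := by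
  constructor
  · -- part (a)
    refine ⟨Function.invFunOn H G, ?_, H, hHsmooth, ?_⟩
    · intro o ho
      rw [← hHsurj] at ho
      obtain ⟨x, hxG, hx⟩ := ho
      exact Function.invFunOn_mem ⟨x, hxG, hx⟩
    · intro o ho
      rw [← hHsurj] at ho
      obtain ⟨x, hxG, hx⟩ := ho
      exact Function.invFunOn_eq ⟨x, hxG, hx⟩
  · -- part (b)
    intro m E' D' hD' hrec
    obtain ⟨x₀, hx₀⟩ := hNne
    have hy₀ : H x₀ ∈ H '' N := mem_image_of_mem H hx₀
    -- derivative of H at x₀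
    have hHat : ContDiffAt ℝ (⊤ : ℕ∞) H x₀ :=
      (hHsmooth.mono hNG).contDiffAt (hNopen.mem_nhds hx₀)
    have hstrict : HasStrictFDerivAt H (fderiv ℝ H x₀) x₀ :=
      hHat.hasStrictFDerivAt (by simp)
    set B : (Fin d → ℝ) →L[ℝ] (Fin r → ℝ) := fderiv ℝ H x₀ with hB
    -- derivative of Hinv within H '' N at H x₀
    set A : (Fin r → ℝ) →L[ℝ] (Fin d → ℝ) :=
      fderivWithin ℝ Hinv (H '' N) (H x₀) with hA
    have hAder : HasFDerivWithinAt Hinv A (H '' N) (H x₀) :=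
      ((hHinv_smooth.differentiableOn (by simp)) _ hy₀).hasFDerivWithinAt
    -- chain rule: A ∘ B = id
    have hcomp : HasFDerivWithinAt (Hinv ∘ H) (A.comp B) N x₀ :=
      hAder.comp x₀ (hstrict.hasFDerivAt.hasFDerivWithinAt) (mapsTo_image H N)
    have hcomp' : HasFDerivAt (Hinv ∘ H) (A.comp B) x₀ :=
      hcomp.hasFDerivAt (hNopen.mem_nhds hx₀)
    have hid : HasFDerivAt (Hinv ∘ H) (ContinuousLinearMap.id ℝ (Fin d → ℝ)) x₀ := by
      have : HasFDerivAt (id : (Fin d → ℝ) → (Fin d → ℝ))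
          (ContinuousLinearMap.id ℝ (Fin d → ℝ)) x₀ := hasFDerivAt_id x₀
      refine this.congr_of_eventuallyEq ?_
      filter_upwards [hNopen.mem_nhds hx₀] with x hx
      exact hleft x hx
    have hAB : A.comp B = ContinuousLinearMap.id ℝ (Fin d → ℝ) :=
      hcomp'.unique hid
    -- f := A ∘ H has strict derivative id at x₀
    set f : (Fin d → ℝ) → (Fin d → ℝ) := fun x => A (H x) with hf
    have hfstrict : HasStrictFDerivAt f
        ((ContinuousLinearEquiv.refl ℝ (Fin d → ℝ) :
          (Fin d → ℝ) ≃L[ℝ] (Fin d → ℝ)) : (Fin d → ℝ) →L[ℝ] (Fin d → ℝ)) x₀ := by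
      have h1 : HasStrictFDerivAt f (A.comp B) x₀ :=
        (A.hasStrictFDerivAt (x := H x₀)).comp x₀ hstrict
      have : ((ContinuousLinearEquiv.refl ℝ (Fin d → ℝ) :
          (Fin d → ℝ) ≃L[ℝ] (Fin d → ℝ)) : (Fin d → ℝ) →L[ℝ] (Fin d → ℝ))
          = ContinuousLinearMap.id ℝ (Fin d → ℝ) := rfl
      rw [this, ← hAB]; exact h1
    -- local inverse g of f, Lipschitz near f x₀
    set g := hfstrict.localInverse f _ x₀ with hg
    obtain ⟨K, t, htmem, hlip⟩ := hfstrict.to_localInverse.exists_lipschitzOnWith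
    -- choose a small ball around x₀
    have hU : N ∩ f ⁻¹' t ∩ {x | g (f x) = x} ∈ nhds x₀ := by
      refine Filter.inter_mem (Filter.inter_mem (hNopen.mem_nhds hx₀) ?_) ?_
      · exact (hfstrict.continuousAt.preimage_mem_nhds htmem)
      · exact hfstrict.eventually_left_inverse
    obtain ⟨ε, hε, hball⟩ := Metric.mem_nhds_iff.1 hU
    -- dimension counting
    have hdim1 : dimH (Metric.ball x₀ ε) = d := Real.dimH_ball_pi_fin x₀ hε
    have hsub : Metric.ball x₀ ε ⊆ g '' (f '' Metric.ball x₀ ε) := by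
      intro x hx
      exact ⟨f x, mem_image_of_mem f hx, (hball hx).2⟩
    have h2 : dimH (g '' (f '' Metric.ball x₀ ε)) ≤ dimH (f '' Metric.ball x₀ ε) := by
      refine LipschitzOnWith.dimH_image_le (hlip.mono ?_)
      rintro y ⟨x, hx, rfl⟩
      exact (hball hx).1.2
    have h3 : f '' Metric.ball x₀ ε = A '' (H '' Metric.ball x₀ ε) := by
      rw [hf, ← image_comp]; rfl
    have h4 : dimH (A '' (H '' Metric.ball x₀ ε)) ≤ dimH (H '' Metric.ball x₀ ε) :=
      A.lipschitz.dimH_image_le _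
    have h5 : H '' Metric.ball x₀ ε ⊆ Set.range D' := by
      rintro y ⟨x, hx, rfl⟩
      have hxN : x ∈ N := (hball hx).1.1
      have hyO : H x ∈ O := by rw [← hHsurj]; exact mem_image_of_mem H (hNG hxN)
      exact ⟨E' (H x), hrec _ hyO⟩
    have h6 : dimH (Set.range D') ≤ (m : ENNReal) := by
      have := (hD'.of_le (by simp) : ContDiff ℝ 1 D').dimH_range_le
      simpa [Module.finrank_fin_fun] using this
    have : (d : ENNReal) ≤ (m : ENNReal) := by
      calc (d : ENNReal) = dimH (Metric.ball x₀ ε) := hdim1.symm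
        _ ≤ dimH (g '' (f '' Metric.ball x₀ ε)) := dimH_mono hsub
        _ ≤ dimH (f '' Metric.ball x₀ ε) := h2
        _ ≤ dimH (H '' Metric.ball x₀ ε) := by rw [h3]; exact h4
        _ ≤ dimH (Set.range D') := dimH_mono h5
        _ ≤ (m : ENNReal) := h6
    exact_mod_cast this
end

section
/- Let X be a finite set, Z a finite set, p a probability distribution on X, and for each x ∈ X let p(·|x) be a conditional distribution on Z. Let p(z) = Σ_x p(x) p(z|x) be the induced marginal. Then for any product distribution h on Z = Z_1 × ⋯ × Z_d, D_KL(p(Z) ‖ ∏_i p(Z_i)) ≤ Σ_x p(x) D_KL(p(·|x) ‖ h), where p(Z_i) are the marginals of p(z). In words: the total correlation of the latent variables is upper bounded by the expected KL divergence between the encoder distribution and any product prior. -/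
open scoped BigOperators Classical

/-- Kullback–Leibler divergence between two distributions (given as real-valued
functions) on a finite set, with the conventions `0 log 0 = 0` and
`D_KL(p‖q) = ∞` if `p` is not absolutely continuous w.r.t. `q`. -/
noncomputable def klDiv {Z : Type*} [Fintype Z] (p q : Z → ℝ) : EReal :=
  if ∀ z, q z = 0 → p z = 0 then
    ((∑ z, if p z = 0 then 0 else p z * Real.log (p z / q z) : ℝ) : EReal)
  else ⊤

/-- The `i`-th marginal of a distribution on a finite product space. -/
noncomputable def marginal {d : ℕ} {Z : Fin d → Type*} [∀ i, Fintype (Z i)]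
    (p : (∀ i, Z i) → ℝ) (i : Fin d) (a : Z i) : ℝ :=
  ∑ z : ∀ j, Z j, if z i = a then p z else 0

/-!
Both inequalities come from the log-sum inequality
`(∑ aᵢ) log (∑ aᵢ / ∑ bᵢ) ≤ ∑ aᵢ log (aᵢ / bᵢ)`.
Applied for each `z` to the family `x ↦ (p x · p(z|x), p x · h z)`, it gives
`D(p(Z) ‖ h) ≤ ∑ₓ p x · D(p(·|x) ‖ h)`.
For a product `h = ∏ᵢ hᵢ` the logarithm splits into coordinates, and
`D(p(Z) ‖ h) = D(p(Z) ‖ ∏ᵢ p(Zᵢ)) + ∑ᵢ D(p(Zᵢ) ‖ hᵢ)`, where the last sum is nonnegative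
by the log-sum inequality again.
-/

open Finset Real

lemma EReal.coe_finsetSum {ι : Type*} (s : Finset ι) (f : ι → ℝ) :
    ((∑ i ∈ s, f i : ℝ) : EReal) = ∑ i ∈ s, (f i : EReal) :=
  map_sum (⟨⟨Real.toEReal, EReal.coe_zero⟩, EReal.coe_add⟩ : ℝ →+ EReal) f s

lemma EReal.sum_eq_top_of_mem {ι : Type*} {s : Finset ι} {f : ι → EReal} {i : ι}
    (hi : i ∈ s) (hfi : f i = ⊤) (hf : ∀ j ∈ s, f j ≠ ⊥) : ∑ j ∈ s, f j = ⊤ := by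
  rw [← add_sum_erase s f hi, hfi]
  exact EReal.top_add_of_ne_bot <| sum_induction f (· ≠ ⊥)
    (fun _ _ ha hb => EReal.add_ne_bot_iff.2 ⟨ha, hb⟩) EReal.zero_ne_bot
    (fun j hj => hf j (mem_of_mem_erase hj))

lemma sub_le_mul_log_div {a b : ℝ} (ha : 0 ≤ a) (hb : 0 ≤ b) (hab : b = 0 → a = 0) :
    a - b ≤ a * log (a / b) := by
  rcases hb.eq_or_lt with rfl | hb
  · simp [hab rfl]
  · have hkl : b * InformationTheory.klFun (a / b) = a * log (a / b) + b - a := by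
      rw [InformationTheory.klFun_apply]
      field_simp
    linarith [mul_nonneg hb.le (InformationTheory.klFun_nonneg (div_nonneg ha hb.le))]

section LogSum

variable {ι : Type*} (s : Finset ι) {a b : ι → ℝ}

lemma sum_eq_zero_of_sum_eq_zero_of_absCont (hb : ∀ i ∈ s, 0 ≤ b i)
    (hab : ∀ i ∈ s, b i = 0 → a i = 0) (h : ∑ i ∈ s, b i = 0) : ∑ i ∈ s, a i = 0 :=
  sum_eq_zero fun i hi => hab i hi ((sum_eq_zero_iff_of_nonneg hb).1 h i hi)

theorem sum_mul_log_div_sum_le (ha : ∀ i ∈ s, 0 ≤ a i) (hb : ∀ i ∈ s, 0 ≤ b i)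
    (hab : ∀ i ∈ s, b i = 0 → a i = 0) :
    (∑ i ∈ s, a i) * log ((∑ i ∈ s, a i) / ∑ i ∈ s, b i) ≤
      ∑ i ∈ s, a i * log (a i / b i) := by
  rcases (sum_nonneg ha).eq_or_lt with hA | hA
  · have ha0 : ∀ i ∈ s, a i = 0 := (sum_eq_zero_iff_of_nonneg ha).1 hA.symm
    rw [← hA, zero_mul]
    exact (sum_eq_zero fun i hi => by rw [ha0 i hi, zero_mul]).ge
  set A := ∑ i ∈ s, a i
  set B := ∑ i ∈ s, b i
  have hB : 0 < B := (sum_nonneg hb).lt_of_ne fun h =>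
    hA.ne' (sum_eq_zero_of_sum_eq_zero_of_absCont s hb hab h.symm)
  -- Compare each `aᵢ` with the rescaled `(A / B) • bᵢ`, which has the same total mass.
  have hterm : ∀ i ∈ s, a i - A / B * b i ≤ a i * log (a i / b i) - a i * log (A / B) := by
    intro i hi
    rcases (ha i hi).eq_or_lt with hai | hai
    · rw [← hai]
      simp only [zero_mul, zero_sub, sub_zero, neg_nonpos]
      exact mul_nonneg (div_nonneg hA.le hB.le) (hb i hi)
    have hbi : b i ≠ 0 := fun h => hai.ne' (hab i hi h)
    have hc : A / B ≠ 0 := by positivity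
    have := sub_le_mul_log_div (ha i hi) (mul_nonneg (div_nonneg hA.le hB.le) (hb i hi))
      fun h => absurd ((mul_eq_zero.1 h).resolve_left hc) hbi
    rwa [div_mul_eq_div_div_swap, log_div (div_ne_zero hai.ne' hbi) hc, mul_sub] at this
  have := sum_le_sum hterm
  rw [sum_sub_distrib, sum_sub_distrib, ← mul_sum, ← sum_mul, div_mul_cancel₀ A hB.ne',
    sub_self] at this
  linarith

theorem sum_mul_log_div_nonneg (ha : ∀ i ∈ s, 0 ≤ a i) (hb : ∀ i ∈ s, 0 ≤ b i)
    (hab : ∀ i ∈ s, b i = 0 → a i = 0) (hs : ∑ i ∈ s, b i ≤ ∑ i ∈ s, a i) :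
    0 ≤ ∑ i ∈ s, a i * log (a i / b i) :=
  calc 0 ≤ ∑ i ∈ s, a i - ∑ i ∈ s, b i := sub_nonneg.2 hs
    _ ≤ (∑ i ∈ s, a i) * log ((∑ i ∈ s, a i) / ∑ i ∈ s, b i) :=
      sub_le_mul_log_div (sum_nonneg ha) (sum_nonneg hb)
        (sum_eq_zero_of_sum_eq_zero_of_absCont s hb hab)
    _ ≤ ∑ i ∈ s, a i * log (a i / b i) := sum_mul_log_div_sum_le s ha hb hab

end LogSum

section KLDiv

variable {Z : Type*} [Fintype Z]

lemma klDiv_of_absCont {p q : Z → ℝ} (h : ∀ z, q z = 0 → p z = 0) :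
    klDiv p q = ((∑ z, p z * log (p z / q z) : ℝ) : EReal) := by
  rw [klDiv, if_pos h]
  congr 1
  refine sum_congr rfl fun z _ => ?_
  split_ifs with hz <;> simp [hz]

lemma klDiv_of_not_absCont {p q : Z → ℝ} (h : ¬ ∀ z, q z = 0 → p z = 0) : klDiv p q = ⊤ :=
  if_neg h

lemma klDiv_ne_bot (p q : Z → ℝ) : klDiv p q ≠ ⊥ := by
  unfold klDiv
  split_ifs <;> simp

lemma coe_mul_klDiv_ne_bot {c : ℝ} (hc : 0 ≤ c) (p q : Z → ℝ) : (c : EReal) * klDiv p q ≠ ⊥ :=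
  (EReal.mul_ne_bot _ _).2 ⟨.inl (EReal.coe_ne_bot c), .inr (klDiv_ne_bot p q),
    .inl (EReal.coe_ne_top c), .inl (EReal.coe_nonneg.2 hc)⟩

theorem klDiv_sum_smul_le {X : Type*} [Fintype X] (w : X → ℝ) (hw : ∀ x, 0 ≤ w x)
    (a b : X → Z → ℝ) (ha : ∀ x z, 0 ≤ a x z) (hb : ∀ x z, 0 ≤ b x z) :
    klDiv (∑ x, w x • a x) (∑ x, w x • b x) ≤ ∑ x, (w x : EReal) * klDiv (a x) (b x) := by
  by_cases hac : ∀ x, w x ≠ 0 → ∀ z, b x z = 0 → a x z = 0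
  swap
  · push Not at hac
    obtain ⟨x, hx, z, hbz, haz⟩ := hac
    refine le_top.trans_eq (EReal.sum_eq_top_of_mem (mem_univ x) ?_
      fun y _ => coe_mul_klDiv_ne_bot (hw y) _ _).symm
    rw [klDiv_of_not_absCont fun h => haz (h z hbz),
      EReal.coe_mul_top_of_pos ((hw x).lt_of_ne' hx)]
  have hwac : ∀ z x, w x * b x z = 0 → w x * a x z = 0 := by
    intro z x h
    by_cases hx : w x = 0
    · rw [hx, zero_mul]
    · rw [hac x hx z ((mul_eq_zero.1 h).resolve_left hx), mul_zero]
  have hmix : ∀ z, (∑ x, w x • b x) z = 0 → (∑ x, w x • a x) z = 0 := by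
    simp only [Finset.sum_apply, Pi.smul_apply, smul_eq_mul]
    exact fun z => sum_eq_zero_of_sum_eq_zero_of_absCont univ
      (fun x _ => mul_nonneg (hw x) (hb x z)) fun x _ => hwac z x
  have hterm : ∀ x, (w x : EReal) * klDiv (a x) (b x) =
      ((w x * ∑ z, a x z * log (a x z / b x z) : ℝ) : EReal) := by
    intro x
    by_cases hx : w x = 0
    · simp [hx]
    · rw [klDiv_of_absCont (hac x hx), EReal.coe_mul]
  rw [klDiv_of_absCont hmix, sum_congr rfl fun x _ => hterm x, ← EReal.coe_finsetSum,
    EReal.coe_le_coe_iff]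
  simp only [Finset.sum_apply, Pi.smul_apply, smul_eq_mul]
  calc ∑ z, (∑ x, w x * a x z) * log ((∑ x, w x * a x z) / ∑ x, w x * b x z)
      ≤ ∑ z, ∑ x, w x * a x z * log (w x * a x z / (w x * b x z)) :=
        sum_le_sum fun z _ => sum_mul_log_div_sum_le univ
          (fun x _ => mul_nonneg (hw x) (ha x z)) (fun x _ => mul_nonneg (hw x) (hb x z))
          fun x _ => hwac z x
    _ = ∑ x, w x * ∑ z, a x z * log (a x z / b x z) := by
        rw [sum_comm]
        refine sum_congr rfl fun x _ => ?_
        by_cases hx : w x = 0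
        · simp [hx]
        · simp only [mul_div_mul_left _ _ hx, mul_sum, mul_assoc]

end KLDiv

section Marginal

variable {d : ℕ} {Z : Fin d → Type*} [∀ i, Fintype (Z i)] {p : (∀ i, Z i) → ℝ}

lemma sum_mul_apply_eq_sum_marginal_mul (p : (∀ i, Z i) → ℝ) (i : Fin d) (g : Z i → ℝ) :
    ∑ z, p z * g (z i) = ∑ a, marginal p i a * g a := by
  simp only [marginal, sum_mul, ite_mul, zero_mul]
  rw [sum_comm]
  simp

lemma sum_marginal (p : (∀ i, Z i) → ℝ) (i : Fin d) : ∑ a, marginal p i a = ∑ z, p z := by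
  simpa using (sum_mul_apply_eq_sum_marginal_mul p i 1).symm

lemma marginal_nonneg (hp : ∀ z, 0 ≤ p z) (i : Fin d) (a : Z i) : 0 ≤ marginal p i a :=
  sum_nonneg fun z _ => by split_ifs <;> simp [hp z]

lemma le_marginal (hp : ∀ z, 0 ≤ p z) (z : ∀ i, Z i) (i : Fin d) : p z ≤ marginal p i (z i) := by
  unfold marginal
  simpa using single_le_sum (f := fun w : ∀ j, Z j => if w i = z i then p w else 0)
    (fun w _ => by split_ifs <;> simp [hp w]) (mem_univ z)

theorem sum_mul_log_div_prod_eq_add (hp : ∀ z, 0 ≤ p z) (h : ∀ i, Z i → ℝ)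
    (hac : ∀ z, ∏ i, h i (z i) = 0 → p z = 0) :
    ∑ z, p z * log (p z / ∏ i, h i (z i)) =
      ∑ z, p z * log (p z / ∏ i, marginal p i (z i)) +
        ∑ i, ∑ a, marginal p i a * log (marginal p i a / h i a) := by
  have hterm : ∀ z, p z * log (p z / ∏ i, h i (z i)) =
      p z * log (p z / ∏ i, marginal p i (z i)) +
        ∑ i, p z * log (marginal p i (z i) / h i (z i)) := by
    intro z
    rcases (hp z).eq_or_lt with hz | hz
    · simp [← hz]
    have hm : ∀ i, marginal p i (z i) ≠ 0 := fun i => (hz.trans_le (le_marginal hp z i)).ne'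
    have hh : ∀ i, h i (z i) ≠ 0 := fun i h0 => hz.ne' (hac z (prod_eq_zero (mem_univ i) h0))
    rw [log_div hz.ne' (prod_ne_zero_iff.2 fun i _ => hh i),
      log_div hz.ne' (prod_ne_zero_iff.2 fun i _ => hm i), log_prod (fun i _ => hh i),
      log_prod (fun i _ => hm i), ← mul_sum]
    simp only [log_div (hm _) (hh _), sum_sub_distrib]
    ring
  rw [sum_congr rfl fun z _ => hterm z, sum_add_distrib, sum_comm]
  simp only [sum_mul_apply_eq_sum_marginal_mul p _ fun a => log (marginal p _ a / h _ a)]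

theorem klDiv_prod_marginal_le (hp : ∀ z, 0 ≤ p z) (h : ∀ i, Z i → ℝ)
    (hh : ∀ i a, 0 ≤ h i a) (hsum : ∀ i, ∑ a, h i a ≤ ∑ z, p z) :
    klDiv p (fun z => ∏ i, marginal p i (z i)) ≤ klDiv p (fun z => ∏ i, h i (z i)) := by
  by_cases hac : ∀ z, ∏ i, h i (z i) = 0 → p z = 0
  swap
  · rw [klDiv_of_not_absCont hac]
    exact le_top
  have hacm : ∀ z, ∏ i, marginal p i (z i) = 0 → p z = 0 := fun z hz => by
    obtain ⟨i, -, hi⟩ := prod_eq_zero_iff.1 hz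
    exact le_antisymm (hi ▸ le_marginal hp z i) (hp z)
  have hacm' : ∀ i a, h i a = 0 → marginal p i a = 0 := fun i a ha =>
    sum_eq_zero fun z _ => by
      split_ifs with hz
      · exact hac z (prod_eq_zero (mem_univ i) (hz ▸ ha))
      · rfl
  rw [klDiv_of_absCont hac, klDiv_of_absCont hacm, EReal.coe_le_coe_iff,
    sum_mul_log_div_prod_eq_add hp h hac, le_add_iff_nonneg_right]
  exact sum_nonneg fun i _ => sum_mul_log_div_nonneg univ (fun a _ => marginal_nonneg hp i a)
    (fun a _ => hh i a) (fun a _ => hacm' i a) ((hsum i).trans_eq (sum_marginal p i).symm)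

end Marginal

/-- The total correlation of the induced latent distribution is upper bounded
by the expected KL divergence between the encoder distribution and any product
prior: `D_KL(p(Z) ‖ ∏ᵢ p(Zᵢ)) ≤ Σₓ p(x) D_KL(p(·|x) ‖ h)`. -/
theorem total_correlation_le_expected_klDiv
    {X : Type*} [Fintype X] {d : ℕ} {Z : Fin d → Type*} [∀ i, Fintype (Z i)]
    (p : X → ℝ) (hp0 : ∀ x, 0 ≤ p x) (hp1 : ∑ x, p x = 1)
    (cond : X → (∀ i, Z i) → ℝ)
    (hc0 : ∀ x z, 0 ≤ cond x z) (hc1 : ∀ x, ∑ z, cond x z = 1)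
    (h : ∀ i, Z i → ℝ) (hh0 : ∀ i a, 0 ≤ h i a) (hh1 : ∀ i, ∑ a, h i a = 1)
    (pz : (∀ i, Z i) → ℝ) (hpz : ∀ z, pz z = ∑ x, p x * cond x z) :
    klDiv pz (fun z => ∏ i, marginal pz i (z i)) ≤
      ∑ x, ((p x : EReal) * klDiv (cond x) (fun z => ∏ i, h i (z i))) := by
  set q : (∀ i, Z i) → ℝ := fun z => ∏ i, h i (z i)
  have hpz_mix : pz = ∑ x, p x • cond x := funext fun z => by simp [hpz]
  have hq_mix : ∑ x, p x • q = q := by rw [← sum_smul, hp1, one_smul]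
  have hpz0 : ∀ z, 0 ≤ pz z := fun z =>
    hpz z ▸ sum_nonneg fun x _ => mul_nonneg (hp0 x) (hc0 x z)
  have hpz1 : ∑ z, pz z = 1 := by
    simp only [hpz]
    rw [sum_comm]
    simp [← mul_sum, hc1, hp1]
  calc klDiv pz (fun z => ∏ i, marginal pz i (z i))
      ≤ klDiv pz q := klDiv_prod_marginal_le hpz0 h hh0 fun i => by rw [hh1, hpz1]
    _ = klDiv (∑ x, p x • cond x) (∑ x, p x • q) := by rw [hq_mix, hpz_mix]
    _ ≤ _ := klDiv_sum_smul_le p hp0 cond _ hc0 fun _ z => prod_nonneg fun i _ => hh0 i (z i)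
end
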